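/- For every integer m ≥ 0, the Jackiw–Pi vortex Q(r) = √8 (m+1) r^m/(1+r^{2m+2}) satisfies ∫₀^∞ Q(r)⁴ r dr < ∞ and Q ∈ L⁴(ℝ²), with 2π∫₀^∞ Q⁴ r dr = 2 ( ∫ |∂_r Q|² dx + ∫ ((m+A_θ[Q])/r)² Q² dx ). -/

import Mathlib

/-!
Bogomolny argument. With `A = Atheta m`, the closed form `A r = -2 (m + 1) u / (1 + u)`,
`u = r ^ (2 m + 2)`, shows that `Q` solves the self-duality equation `r Q' = (m + A) Q`, so the
two integrals on the right-hand side agree. Since `A' = -Q² r / 2`, the boundary term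
`B = Q² (m + A) / 2` satisfies `B' = Q'² r - Q⁴ r / 4`, and `B` vanishes at `0` and at infinity
(`Q = O(r⁻²)` and `A` is bounded), whence `∫ Q⁴ r = 4 ∫ Q'² r`. The decay `Q, Q' = O(r⁻²)` also
gives the integrability of `Q⁴ r` and `Q'² r`.
-/

open MeasureTheory Set

/-- The Jackiw–Pi vortex profile. -/
noncomputable def Q (m : ℕ) (r : ℝ) : ℝ :=
  Real.sqrt 8 * ((m : ℝ) + 1) * r ^ m / (1 + r ^ (2 * m + 2))

/-- The angular connection component of `Q`. -/
noncomputable def Atheta (m : ℕ) (r : ℝ) : ℝ :=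
  -(1/2) * ∫ s in (0:ℝ)..r, (Q m s) ^ 2 * s

open Filter Topology

lemma abs_pow_mul_le_of_abs_le {x r C : ℝ} (hr : 1 ≤ r) (hx : |x| ≤ C / r ^ 2) {n : ℕ}
    (hn : 2 ≤ n) : |x ^ n * r| ≤ C ^ n / r ^ 2 := by
  have hr0 : 0 < r := one_pos.trans_le hr
  have hC : 0 ≤ C := by
    have := mul_nonneg ((abs_nonneg x).trans hx) (sq_nonneg r)
    rwa [div_mul_cancel₀ _ (by positivity)] at this
  calc |x ^ n * r| = |x| ^ n * r := by rw [abs_mul, abs_pow, abs_of_pos hr0]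
    _ ≤ (C / r ^ 2) ^ n * r := by gcongr
    _ = C ^ n * r / (r ^ 2) ^ n := by rw [div_pow]; ring
    _ ≤ C ^ n * r / r ^ 3 := by
        rw [← pow_mul]
        gcongr
        omega
    _ = C ^ n / r ^ 2 := by field_simp

lemma integrableOn_Ioi_of_abs_le_div_sq {f : ℝ → ℝ} (hf : Continuous f) {C : ℝ}
    (hb : ∀ r, 1 ≤ r → |f r| ≤ C / r ^ 2) : IntegrableOn f (Ioi 0) := by
  have ho : f =O[atTop] fun r => r ^ (-2 : ℝ) := by
    refine Asymptotics.IsBigO.of_bound C ?_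
    filter_upwards [eventually_ge_atTop 1] with r hr
    have hr0 : 0 < r := one_pos.trans_le hr
    rw [Real.norm_eq_abs, Real.norm_eq_abs, abs_of_pos (Real.rpow_pos_of_pos hr0 _),
      Real.rpow_neg_ofNat, zpow_neg, zpow_ofNat, ← div_eq_mul_inv]
    exact hb r hr
  exact ((hf.locallyIntegrable.locallyIntegrableOn _).integrableOn_of_isBigO_atTop ho
    (integrableAtFilter_rpow_atTop_iff.2 (by norm_num))).mono_set Ioi_subset_Ici_self

lemma integrableOn_Ioi_pow_mul_of_abs_le_div_sq {f : ℝ → ℝ} (hf : Continuous f) {C : ℝ}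
    (hb : ∀ r, 1 ≤ r → |f r| ≤ C / r ^ 2) {n : ℕ} (hn : 2 ≤ n) :
    IntegrableOn (fun r => f r ^ n * r) (Ioi 0) :=
  integrableOn_Ioi_of_abs_le_div_sq (by fun_prop) fun r hr =>
    abs_pow_mul_le_of_abs_le hr (hb r hr) hn

section

variable (m : ℕ)

lemma pow_two_mul_add_two_nonneg (r : ℝ) : 0 ≤ r ^ (2 * m + 2) :=
  Even.pow_nonneg ⟨m + 1, by ring⟩ r

lemma one_add_pow_pos (r : ℝ) : 0 < 1 + r ^ (2 * m + 2) := by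
  linarith [pow_two_mul_add_two_nonneg m r]

lemma hasDerivAt_one_add_pow (r : ℝ) :
    HasDerivAt (fun s : ℝ => 1 + s ^ (2 * m + 2)) ((2 * m + 2) * r ^ (2 * m + 1)) r := by
  refine ((hasDerivAt_pow (2 * m + 2) r).const_add 1).congr_deriv ?_
  push_cast
  ring_nf

lemma Q_sq (r : ℝ) :
    Q m r ^ 2 = 8 * ((m : ℝ) + 1) ^ 2 * r ^ (2 * m) / (1 + r ^ (2 * m + 2)) ^ 2 := by
  rw [Q, div_pow, mul_pow, mul_pow, Real.sq_sqrt (by norm_num), ← pow_mul, mul_comm m]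

lemma contDiff_Q : ContDiff ℝ ⊤ (Q m) :=
  ContDiff.div (by fun_prop) (by fun_prop) fun r => (one_add_pow_pos m r).ne'

lemma continuous_Q : Continuous (Q m) := (contDiff_Q m).continuous

lemma continuous_deriv_Q : Continuous (deriv (Q m)) := (contDiff_Q m).continuous_deriv le_top

lemma hasDerivAt_Atheta (r : ℝ) :
    HasDerivAt (Atheta m) (-(1 / 2) * (Q m r ^ 2 * r)) r := by
  have hF := (((continuous_Q m).pow 2).mul continuous_id).integral_hasStrictDerivAt 0 r
  exact hF.hasDerivAt.const_mul _

lemma Atheta_eq (r : ℝ) :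
    Atheta m r = -2 * ((m : ℝ) + 1) * r ^ (2 * m + 2) / (1 + r ^ (2 * m + 2)) := by
  have hint : ∫ s in (0:ℝ)..r, Q m s ^ 2 * s
      = -4 * ((m : ℝ) + 1) / (1 + r ^ (2 * m + 2))
        - -4 * ((m : ℝ) + 1) / (1 + 0 ^ (2 * m + 2)) := by
    refine intervalIntegral.integral_eq_sub_of_hasDerivAt
      (f := fun s => -4 * ((m : ℝ) + 1) / (1 + s ^ (2 * m + 2))) (fun x _ => ?_)
      ((((continuous_Q m).pow 2).mul continuous_id).intervalIntegrable 0 r)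
    have hD := (one_add_pow_pos m x).ne'
    refine ((hasDerivAt_const x _).div (hasDerivAt_one_add_pow m x) hD).congr_deriv ?_
    rw [Q_sq]; field_simp; ring
  have hD := (one_add_pow_pos m r).ne'
  rw [Atheta, hint, zero_pow (by omega)]
  field_simp
  ring

lemma hasDerivAt_Q {r : ℝ} (hr : r ≠ 0) :
    HasDerivAt (Q m) (Q m r * (((m : ℝ) + Atheta m r) / r)) r := by
  have hD := (one_add_pow_pos m r).ne'
  refine (((hasDerivAt_pow m r).const_mul (Real.sqrt 8 * ((m : ℝ) + 1))).div
    (hasDerivAt_one_add_pow m r) hD).congr_deriv ?_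
  rw [Q, Atheta_eq]
  rcases m with _ | n
  · field_simp
    ring
  · simp only [Nat.add_sub_cancel]
    field_simp
    ring

lemma deriv_Q {r : ℝ} (hr : r ≠ 0) :
    deriv (Q m) r = Q m r * (((m : ℝ) + Atheta m r) / r) :=
  (hasDerivAt_Q m hr).deriv

noncomputable def bogomolnyBoundary (r : ℝ) : ℝ := Q m r ^ 2 * ((m : ℝ) + Atheta m r) / 2

lemma hasDerivAt_bogomolnyBoundary {r : ℝ} (hr : r ≠ 0) :
    HasDerivAt (bogomolnyBoundary m)
      ((((m : ℝ) + Atheta m r) / r) ^ 2 * Q m r ^ 2 * r - Q m r ^ 4 * r / 4) r := by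
  refine ((((hasDerivAt_Q m hr).pow 2).mul ((hasDerivAt_Atheta m r).const_add (m : ℝ))).div_const
    2).congr_deriv ?_
  simp only [Pi.pow_apply]
  field_simp
  ring

lemma bogomolnyBoundary_zero : bogomolnyBoundary m 0 = 0 := by
  rcases m with _ | n <;> simp [bogomolnyBoundary, Atheta, Q]

lemma abs_Atheta_le (r : ℝ) : |Atheta m r| ≤ 2 * ((m : ℝ) + 1) := by
  have hD := one_add_pow_pos m r
  have hu := pow_two_mul_add_two_nonneg m r
  rw [Atheta_eq, abs_div, abs_of_pos hD, div_le_iff₀ hD, abs_mul, abs_of_nonneg hu, neg_mul,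
    abs_neg, abs_of_pos (by positivity)]
  nlinarith

lemma abs_Q_le {r : ℝ} (hr : 1 ≤ r) : |Q m r| ≤ Real.sqrt 8 * ((m : ℝ) + 1) / r ^ 2 := by
  have hr0 : 0 < r := one_pos.trans_le hr
  have hD := one_add_pow_pos m r
  have hpow : r ^ m * r ^ 2 ≤ 1 + r ^ (2 * m + 2) := by
    rw [← pow_add]
    linarith [pow_le_pow_right₀ hr (show m + 2 ≤ 2 * m + 2 by omega)]
  rw [Q, abs_of_nonneg (by positivity), div_le_div_iff₀ hD (by positivity), mul_assoc]
  gcongr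

lemma abs_natCast_add_Atheta_le (r : ℝ) : |(m : ℝ) + Atheta m r| ≤ 3 * m + 2 := by
  calc |(m : ℝ) + Atheta m r| ≤ |(m : ℝ)| + |Atheta m r| := abs_add_le _ _
    _ ≤ m + 2 * ((m : ℝ) + 1) := by rw [Nat.abs_cast]; gcongr; exact abs_Atheta_le m r
    _ = 3 * m + 2 := by ring

lemma abs_deriv_Q_le {r : ℝ} (hr : 1 ≤ r) :
    |deriv (Q m) r| ≤ Real.sqrt 8 * ((m : ℝ) + 1) * (3 * m + 2) / r ^ 2 := by
  have hr0 : 0 < r := one_pos.trans_le hr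
  rw [deriv_Q m hr0.ne', abs_mul, abs_div, abs_of_pos hr0]
  calc |Q m r| * (|(m : ℝ) + Atheta m r| / r)
      ≤ Real.sqrt 8 * ((m : ℝ) + 1) / r ^ 2 * (3 * m + 2) := by
        gcongr
        · exact abs_Q_le m hr
        · exact (div_le_self (abs_nonneg _) hr).trans (abs_natCast_add_Atheta_le m r)
    _ = Real.sqrt 8 * ((m : ℝ) + 1) * (3 * m + 2) / r ^ 2 := by ring

lemma tendsto_Q_atTop : Tendsto (Q m) atTop (𝓝 0) :=
  squeeze_zero_norm' ((eventually_ge_atTop 1).mono fun _ hr => abs_Q_le m hr)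
    (tendsto_const_nhds.div_atTop (tendsto_pow_atTop two_ne_zero))

lemma tendsto_bogomolnyBoundary_atTop : Tendsto (bogomolnyBoundary m) atTop (𝓝 0) := by
  have hbdd : IsBoundedUnder (· ≤ ·) atTop (norm ∘ fun r => (m : ℝ) + Atheta m r) :=
    isBoundedUnder_of ⟨3 * m + 2, abs_natCast_add_Atheta_le m⟩
  have hQ2 : Tendsto (fun r => Q m r ^ 2) atTop (𝓝 0) := by simpa using (tendsto_Q_atTop m).pow 2
  have := (hQ2.zero_mul_isBoundedUnder_le hbdd).div_const 2
  rwa [zero_div] at this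

lemma continuous_bogomolnyBoundary : Continuous (bogomolnyBoundary m) := by
  have hA : Continuous (Atheta m) :=
    continuous_iff_continuousAt.2 fun r => (hasDerivAt_Atheta m r).continuousAt
  exact (((continuous_Q m).pow 2).mul (continuous_const.add hA)).div_const 2

lemma integrableOn_Q_pow_four_mul : IntegrableOn (fun r => Q m r ^ 4 * r) (Ioi 0) :=
  integrableOn_Ioi_pow_mul_of_abs_le_div_sq (continuous_Q m) (fun _ => abs_Q_le m) (by norm_num)

lemma integrableOn_deriv_Q_sq_mul : IntegrableOn (fun r => deriv (Q m) r ^ 2 * r) (Ioi 0) :=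
  integrableOn_Ioi_pow_mul_of_abs_le_div_sq (continuous_deriv_Q m) (fun _ => abs_deriv_Q_le m)
    le_rfl

lemma eqOn_deriv_Q_sq_mul :
    EqOn (fun r => deriv (Q m) r ^ 2 * r)
      (fun r => (((m : ℝ) + Atheta m r) / r) ^ 2 * Q m r ^ 2 * r) (Ioi 0) := by
  intro r hr
  simp only [deriv_Q m (ne_of_gt hr)]
  ring

lemma integrableOn_angular_sq_mul :
    IntegrableOn (fun r => (((m : ℝ) + Atheta m r) / r) ^ 2 * Q m r ^ 2 * r) (Ioi 0) :=
  (integrableOn_deriv_Q_sq_mul m).congr_fun (eqOn_deriv_Q_sq_mul m) measurableSet_Ioi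

lemma integral_Q_pow_four_mul :
    ∫ r in Ioi (0 : ℝ), Q m r ^ 4 * r
      = 4 * ∫ r in Ioi (0 : ℝ), (((m : ℝ) + Atheta m r) / r) ^ 2 * Q m r ^ 2 * r := by
  have hQ4 := (integrableOn_Q_pow_four_mul m).div_const 4
  have hbalance := integral_Ioi_of_hasDerivAt_of_tendsto
    (continuous_bogomolnyBoundary m).continuousWithinAt
    (fun r hr => hasDerivAt_bogomolnyBoundary m (ne_of_gt hr))
    ((integrableOn_angular_sq_mul m).sub hQ4) (tendsto_bogomolnyBoundary_atTop m)
  rw [bogomolnyBoundary_zero, sub_zero, integral_sub (integrableOn_angular_sq_mul m) hQ4,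
    integral_div] at hbalance
  linarith

end

theorem vortex_quartic_identity (m : ℕ) :
    IntegrableOn (fun r => (Q m r) ^ 4 * r) (Ioi 0) ∧
      2 * Real.pi * ∫ r in Ioi (0:ℝ), (Q m r) ^ 4 * r
        = 2 * ((2 * Real.pi * ∫ r in Ioi (0:ℝ), (deriv (Q m) r) ^ 2 * r)
            + (2 * Real.pi * ∫ r in Ioi (0:ℝ),
                (((m : ℝ) + Atheta m r) / r) ^ 2 * (Q m r) ^ 2 * r)) := by
  refine ⟨integrableOn_Q_pow_four_mul m, ?_⟩
  rw [setIntegral_congr_fun measurableSet_Ioi (eqOn_deriv_Q_sq_mul m), integral_Q_pow_four_mul]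
  ring
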